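/- For every n ≥ 1 and every z in the open unit disc D, E[|q_n(z)|²] ≤ 1/(1 − |z|²). -/

import Mathlib

/-!
Write `qₙ(z) = det M` with `M = 1 - t A`, `t = z/√n`. Expanding `|det M|²` by the Leibniz formula
over pairs of permutations `(σ, τ)`, independence of the columns of `M` factors the expectation
column by column, and `E[M_{σj,j} conj M_{τj,j}] = [σj = j][τj = j] + |t|²[σj = τj]`. Only the
diagonal `σ = τ` survives, leaving `∑_σ ∏_j ([σj = j] + |t|²)`, which counts permutations by
fixed points: `E|qₙ(z)|² = ∑_k n!/(n-k)! (|z|²/n)^k ≤ ∑_k |z|^{2k} ≤ 1/(1 - |z|²)`.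
-/

open MeasureTheory ProbabilityTheory Filter Metric

noncomputable section

/-- The `n × n` matrix whose `(i,j)` entry is `a i j ω`. -/
def entryMatrix {Ω : Type*} (a : ℕ → ℕ → Ω → ℂ) (n : ℕ) (ω : Ω) :
    Matrix (Fin n) (Fin n) ℂ :=
  Matrix.of fun i j : Fin n => a i.1 j.1 ω

open Finset ComplexConjugate Equiv
open scoped Nat

namespace Equiv.Perm

variable {α : Type*} [Fintype α] [DecidableEq α]

theorem card_filter_forall_notMem_apply_eq (T : Finset α) :
    #{σ : Perm α | ∀ i ∉ T, σ i = i} = (#T)! := by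
  rw [← Fintype.card_subtype, ← Fintype.card_congr (Perm.subtypeEquivSubtypePerm (· ∈ T)),
    Fintype.card_perm, Fintype.card_coe]

theorem sum_prod_ite_apply_eq_add {R : Type*} [CommSemiring R] (s : R) :
    ∑ σ : Perm α, ∏ i, ((if σ i = i then 1 else 0) + s)
      = ∑ k ∈ range (Fintype.card α + 1), ((Fintype.card α).descFactorial k : R) * s ^ k := by
  calc ∑ σ : Perm α, ∏ i, ((if σ i = i then 1 else 0) + s)
      = ∑ T ∈ (univ : Finset α).powerset, ∑ σ : Perm α,
          s ^ #T * if ∀ i ∉ T, σ i = i then 1 else 0 := by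
        rw [sum_comm]
        refine sum_congr rfl fun σ _ ↦ ?_
        simp_rw [add_comm _ s, prod_add, prod_const, prod_boole]
        simp
    _ = ∑ T ∈ (univ : Finset α).powerset, ((#T)! * s ^ #T : R) := by
        refine sum_congr rfl fun T _ ↦ ?_
        rw [← mul_sum, sum_boole, card_filter_forall_notMem_apply_eq, mul_comm]
    _ = _ := by
        rw [sum_powerset_apply_card (fun k ↦ (k ! * s ^ k : R)), Finset.card_univ]
        refine sum_congr rfl fun k _ ↦ ?_
        rw [Nat.descFactorial_eq_factorial_mul_choose, nsmul_eq_mul]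
        push_cast
        ring

theorem sum_sum_sign_mul_prod_ite {R : Type*} [CommRing R] (s : R) :
    ∑ σ : Perm α, ∑ τ : Perm α, ((sign σ * sign τ : ℤˣ) : R) *
      ∏ j, ((if σ j = j ∧ τ j = j then 1 else 0) + if σ j = τ j then s else 0)
    = ∑ σ : Perm α, ∏ j, ((if σ j = j then 1 else 0) + s) := by
  refine sum_congr rfl fun σ _ ↦ ?_
  rw [sum_eq_single σ]
  · simp [Int.units_mul_self]
  · intro τ _ hτσ
    obtain ⟨j, hj⟩ : ∃ j, σ j ≠ τ j := by
      by_contra! h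
      exact hτσ (Perm.ext h).symm
    rw [prod_eq_zero (mem_univ j), mul_zero]
    rw [if_neg hj, if_neg fun h ↦ hj (h.1.trans h.2.symm), add_zero]
  · simp

end Equiv.Perm

theorem sum_descFactorial_mul_div_pow_le {x : ℝ} (hx0 : 0 ≤ x) (hx1 : x < 1) (n : ℕ) :
    ∑ k ∈ range (n + 1), (n.descFactorial k : ℝ) * (x / n) ^ k ≤ 1 / (1 - x) := by
  calc ∑ k ∈ range (n + 1), (n.descFactorial k : ℝ) * (x / n) ^ k
      ≤ ∑ k ∈ range (n + 1), x ^ k := by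
        refine sum_le_sum fun k _ ↦ ?_
        rw [div_pow, mul_div_assoc']
        refine div_le_of_le_mul₀ (by positivity) (by positivity) ?_
        rw [mul_comm]
        gcongr
        exact_mod_cast Nat.descFactorial_le_pow n k
    _ ≤ 1 / (1 - x) := by
        simpa [← range_eq_Ico] using geom_sum_Ico_le_of_lt_one (m := 0) (n := n + 1) hx0 hx1

lemma Matrix.det_mul_conj_det {n 𝕜 : Type*} [Fintype n] [DecidableEq n] [RCLike 𝕜]
    (A : Matrix n n 𝕜) :
    A.det * conj A.det = ∑ σ : Perm n, ∑ τ : Perm n,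
      ((Perm.sign σ * Perm.sign τ : ℤˣ) : 𝕜) * ∏ j, A (σ j) j * conj (A (τ j) j) := by
  rw [Matrix.det_apply', map_sum, sum_mul_sum]
  refine sum_congr rfl fun σ _ ↦ sum_congr rfl fun τ _ ↦ ?_
  rw [map_mul, map_prod, prod_mul_distrib, map_intCast]
  push_cast
  ring

section Integration

variable {Ω : Type*} {mΩ : MeasurableSpace Ω} {P : Measure Ω}

namespace ProbabilityTheory

lemma iIndepFun.curry {ι : Type*} {κ : ι → Type*} {𝓧 : (i : ι) → κ i → Type*}
    {m𝓧 : ∀ i j, MeasurableSpace (𝓧 i j)} {X : (i : ι) → (j : κ i) → Ω → 𝓧 i j}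
    (mX : ∀ i j, Measurable (X i j))
    (h : iIndepFun (fun (p : (i : ι) × κ i) ω ↦ X p.1 p.2 ω) P) :
    iIndepFun (fun i ω ↦ (X i · ω)) P := by
  have := h.isProbabilityMeasure
  have : ∀ i j, IsProbabilityMeasure (P.map (X i j)) :=
    fun i j ↦ Measure.isProbabilityMeasure_map (mX i j).aemeasurable
  have hgroup : ∀ i, P.map (fun ω j ↦ X i j ω) = Measure.infinitePi fun j ↦ P.map (X i j) :=
    fun i ↦ (h.precomp sigma_mk_injective).map_fun_eq_infinitePi_map (mX i)
  rw [iIndepFun_iff_map_fun_eq_infinitePi_map (fun i ↦ by fun_prop)]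
  simp_rw [hgroup]
  rw [← Measure.infinitePi_map_piCurry, ← h.map_fun_eq_infinitePi_map (fun p ↦ mX p.1 p.2),
    Measure.map_map (by fun_prop) (by fun_prop)]
  rfl

lemma iIndepFun.integrable_finsetProd {ι 𝕜 : Type*} [RCLike 𝕜] {X : ι → Ω → 𝕜}
    (hX : iIndepFun X P) (mX : ∀ i, Measurable (X i)) (hint : ∀ i, Integrable (X i) P)
    (s : Finset ι) : Integrable (fun ω ↦ ∏ i ∈ s, X i ω) P := by
  have := hX.isProbabilityMeasure
  induction s using Finset.cons_induction with
  | empty => simp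
  | cons j s hj ih =>
    rw [← prod_fn] at ih ⊢
    rw [prod_cons]
    exact (hX.indepFun_finsetProd_of_notMem mX hj).symm.integrable_mul (hint j) ih

lemma iIndepFun.integral_mul_conj_of_identDistrib {ι 𝕜 : Type*} [DecidableEq ι] [RCLike 𝕜]
    {X : ι → Ω → 𝕜} {ξ : Ω → 𝕜} (mX : ∀ i, Measurable (X i)) (hX : iIndepFun X P)
    (hident : ∀ i, IdentDistrib (X i) ξ P P)
    (hmean : ∫ ω, ξ ω ∂P = 0) (hvar : ∫ ω, ‖ξ ω‖ ^ 2 ∂P = 1) (i j : ι) :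
    ∫ ω, X i ω * conj (X j ω) ∂P = if i = j then 1 else 0 := by
  split_ifs with hij
  · subst hij
    have hnorm : ∫ ω, ‖X i ω‖ ^ 2 ∂P = 1 :=
      ((hident i).comp (measurable_norm.pow_const 2)).integral_eq.trans hvar
    simp_rw [RCLike.mul_conj, ← RCLike.ofReal_pow]
    rw [integral_ofReal, hnorm, RCLike.ofReal_one]
  · have hXY : IndepFun (X i) (fun ω ↦ conj (X j ω)) P :=
      (hX.indepFun hij).comp measurable_id RCLike.continuous_conj.measurable
    rw [hXY.integral_fun_mul_eq_mul_integral (mX i).aestronglyMeasurable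
      (RCLike.continuous_conj.measurable.comp (mX j)).aestronglyMeasurable]
    simp [integral_conj, (hident j).integral_eq, hmean]

end ProbabilityTheory

lemma integral_sub_mul_conj_sub {𝕜 : Type*} [RCLike 𝕜] [IsProbabilityMeasure P]
    {X Y : Ω → 𝕜} (hX : MemLp X 2 P) (hY : MemLp Y 2 P)
    (hX0 : ∫ ω, X ω ∂P = 0) (hY0 : ∫ ω, Y ω ∂P = 0) (c d : 𝕜) :
    ∫ ω, (c - X ω) * conj (d - Y ω) ∂P = c * conj d + ∫ ω, X ω * conj (Y ω) ∂P := by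
  have hXi := hX.integrable one_le_two
  have hYi : Integrable (fun ω ↦ conj (Y ω)) P := hY.star.integrable one_le_two
  have hXY : Integrable (fun ω ↦ X ω * conj (Y ω)) P := hX.integrable_mul hY.star
  have hexp : ∀ ω, (c - X ω) * conj (d - Y ω)
      = c * conj d - c * conj (Y ω) - conj d * X ω + X ω * conj (Y ω) := by
    intro ω; simp only [map_sub]; ring
  have hc : Integrable (fun ω ↦ c * conj d - c * conj (Y ω)) P :=
    (integrable_const _).sub (hYi.const_mul c)
  have hcX : Integrable (fun ω ↦ c * conj d - c * conj (Y ω) - conj d * X ω) P :=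
    hc.sub (hXi.const_mul _)
  simp_rw [hexp]
  rw [integral_add hcX hXY, integral_sub hc (hXi.const_mul _),
    integral_sub (integrable_const _) (hYi.const_mul c)]
  simp [integral_const_mul, integral_conj, hX0, hY0]

section IndependentColumns

variable {n 𝕜 : Type*} [Fintype n] [DecidableEq n] [RCLike 𝕜] {M : Ω → Matrix n n 𝕜}

theorem integral_det_mul_conj_det_of_iIndepFun_col
    (mM : ∀ i j, Measurable fun ω ↦ M ω i j) (hM : ∀ i j, MemLp (fun ω ↦ M ω i j) 2 P)
    (hcol : iIndepFun (fun j ω i ↦ M ω i j) P) :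
    ∫ ω, (M ω).det * conj (M ω).det ∂P = ∑ σ : Perm n, ∑ τ : Perm n,
      ((Perm.sign σ * Perm.sign τ : ℤˣ) : 𝕜) *
        ∏ j, ∫ ω, M ω (σ j) j * conj (M ω (τ j) j) ∂P := by
  have mconj : Measurable (conj : 𝕜 → 𝕜) := RCLike.continuous_conj.measurable
  have hterm : ∀ σ τ : Perm n,
      iIndepFun (fun j ω ↦ M ω (σ j) j * conj (M ω (τ j) j)) P := fun σ τ ↦
    hcol.comp (fun j c ↦ c (σ j) * conj (c (τ j))) fun j ↦ by fun_prop
  have mterm : ∀ (σ τ : Perm n) j, Measurable fun ω ↦ M ω (σ j) j * conj (M ω (τ j) j) :=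
    fun σ τ j ↦ by fun_prop
  have iterm : ∀ (σ τ : Perm n) j, Integrable (fun ω ↦ M ω (σ j) j * conj (M ω (τ j) j)) P :=
    fun σ τ j ↦ (hM (σ j) j).integrable_mul (hM (τ j) j).star
  simp_rw [Matrix.det_mul_conj_det]
  rw [integral_finsetSum _ fun σ _ ↦ integrable_finsetSum _ fun τ _ ↦
    ((hterm σ τ).integrable_finsetProd (mterm σ τ) (iterm σ τ) univ).const_mul _]
  refine sum_congr rfl fun σ _ ↦ ?_
  rw [integral_finsetSum _ fun τ _ ↦
    ((hterm σ τ).integrable_finsetProd (mterm σ τ) (iterm σ τ) univ).const_mul _]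
  refine sum_congr rfl fun τ _ ↦ ?_
  rw [integral_const_mul, (hterm σ τ).integral_fun_prod_eq_prod_integral
    fun j ↦ (mterm σ τ j).aestronglyMeasurable]

theorem integral_norm_det_sq_of_iIndepFun_col
    (mM : ∀ i j, Measurable fun ω ↦ M ω i j) (hM : ∀ i j, MemLp (fun ω ↦ M ω i j) 2 P)
    (hcol : iIndepFun (fun j ω i ↦ M ω i j) P) {s : ℝ}
    (hcov : ∀ p q j, ∫ ω, M ω p j * conj (M ω q j) ∂P
      = (if p = j ∧ q = j then 1 else 0) + if p = q then (s : 𝕜) else 0) :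
    ∫ ω, ‖(M ω).det‖ ^ 2 ∂P
      = ∑ k ∈ range (Fintype.card n + 1), ((Fintype.card n).descFactorial k : ℝ) * s ^ k := by
  apply RCLike.ofReal_injective (K := 𝕜)
  rw [← integral_ofReal]
  simp_rw [RCLike.ofReal_pow, ← RCLike.mul_conj]
  rw [integral_det_mul_conj_det_of_iIndepFun_col mM hM hcol]
  simp_rw [hcov]
  rw [Perm.sum_sum_sign_mul_prod_ite, Perm.sum_prod_ite_apply_eq_add]
  push_cast
  rfl

end IndependentColumns

section EntryMatrix

variable {a : ℕ → ℕ → Ω → ℂ}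

lemma iIndepFun_col_entryMatrix (hmeas : ∀ i j, Measurable (a i j))
    (hindep : iIndepFun (fun p : ℕ × ℕ => a p.1 p.2) P) (n : ℕ) :
    iIndepFun (fun (j : Fin n) ω (i : Fin n) ↦ entryMatrix a n ω i j) P := by
  have hinj : Function.Injective fun p : (_ : Fin n) × Fin n ↦ ((p.2 : ℕ), (p.1 : ℕ)) := by
    rintro ⟨j, i⟩ ⟨j', i'⟩ h
    simp only [Prod.mk.injEq, Fin.val_inj] at h
    obtain ⟨rfl, rfl⟩ := h
    rfl
  exact (hindep.precomp hinj).curry (ι := Fin n) (κ := fun _ ↦ Fin n) (X := fun j i ω ↦ a i j ω)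
    fun _ _ ↦ hmeas _ _

lemma integral_one_sub_smul_entryMatrix_mul_conj (hmeas : ∀ i j, Measurable (a i j))
    (hindep : iIndepFun (fun p : ℕ × ℕ => a p.1 p.2) P)
    (hident : ∀ i j, IdentDistrib (a i j) (a 0 0) P P) (hL2 : MemLp (a 0 0) 2 P)
    (hmean : ∫ ω, a 0 0 ω ∂P = 0) (hvar : ∫ ω, ‖a 0 0 ω‖ ^ 2 ∂P = 1)
    {n : ℕ} (t : ℂ) (p q j : Fin n) :
    ∫ ω, (1 - t • entryMatrix a n ω) p j * conj ((1 - t • entryMatrix a n ω) q j) ∂P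
      = (if p = j ∧ q = j then 1 else 0) + if p = q then ((‖t‖ ^ 2 : ℝ) : ℂ) else 0 := by
  have := hindep.isProbabilityMeasure
  have hmem : ∀ i k, MemLp (fun ω ↦ t * a i k ω) 2 P :=
    fun i k ↦ ((hident i k).symm.memLp_snd hL2).const_mul t
  have hcentered : ∀ i k, ∫ ω, t * a i k ω ∂P = 0 := fun i k ↦ by
    rw [integral_const_mul, (hident i k).integral_eq, hmean, mul_zero]
  have horth := hindep.integral_mul_conj_of_identDistrib (X := fun p : ℕ × ℕ ↦ a p.1 p.2)
    (fun p ↦ hmeas p.1 p.2) (fun p ↦ hident p.1 p.2) hmean hvar (p, j) (q, j)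
  have hscale : ∀ ω, t * a p j ω * conj (t * a q j ω) = t * conj t * (a p j ω * conj (a q j ω)) :=
    fun ω ↦ by rw [map_mul]; ring
  simp only [Matrix.sub_apply, Matrix.one_apply, Matrix.smul_apply, entryMatrix, Matrix.of_apply,
    smul_eq_mul]
  rw [integral_sub_mul_conj_sub (hmem _ _) (hmem _ _) (hcentered _ _) (hcentered _ _)]
  simp_rw [hscale]
  rw [integral_const_mul, horth, Complex.mul_conj']
  simp only [Prod.mk.injEq, Fin.val_inj, and_true]
  split_ifs <;> simp_all

end EntryMatrix

end Integration

theorem qn_second_moment_bound_general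
    {Ω : Type*} [MeasurableSpace Ω] (P : Measure Ω) [IsProbabilityMeasure P]
    (a : ℕ → ℕ → Ω → ℂ)
    (hmeas : ∀ i j, Measurable (a i j))
    (hindep : iIndepFun (fun p : ℕ × ℕ => a p.1 p.2) P)
    (hident : ∀ i j, IdentDistrib (a i j) (a 0 0) P P)
    (hL2 : MemLp (a 0 0) 2 P)
    (hmean : ∫ ω, a 0 0 ω ∂P = 0)
    (hvar : ∫ ω, ‖a 0 0 ω‖ ^ 2 ∂P = 1)
    (n : ℕ) (z : ℂ) (hz : z ∈ ball (0 : ℂ) 1) :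
    ∫ ω, ‖(1 - z • (((Real.sqrt n)⁻¹ : ℂ) • entryMatrix a n ω)).det‖ ^ 2 ∂P
      ≤ 1 / (1 - ‖z‖ ^ 2) := by
  simp_rw [smul_smul]
  set t : ℂ := z * ((Real.sqrt n)⁻¹ : ℂ)
  have hentry : ∀ ω (i j : Fin n), (1 - t • entryMatrix a n ω) i j
      = (1 : Matrix (Fin n) (Fin n) ℂ) i j - t * a i j ω := fun _ _ _ ↦ rfl
  have mM : ∀ i j : Fin n, Measurable fun ω ↦ (1 - t • entryMatrix a n ω) i j := fun i j ↦ by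
    simp_rw [hentry]
    exact measurable_const.sub ((hmeas i j).const_mul t)
  have hM : ∀ i j : Fin n, MemLp (fun ω ↦ (1 - t • entryMatrix a n ω) i j) 2 P := fun i j ↦ by
    simp_rw [hentry]
    exact (memLp_const _).sub (((hident i j).symm.memLp_snd hL2).const_mul t)
  have hcol : iIndepFun (fun j ω i ↦ (1 - t • entryMatrix a n ω) i j) P :=
    (iIndepFun_col_entryMatrix hmeas hindep n).comp
      (fun j c i ↦ (1 : Matrix (Fin n) (Fin n) ℂ) i j - t * c i) fun j ↦ by fun_prop
  have ht : ‖t‖ ^ 2 = ‖z‖ ^ 2 / n := by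
    simp [t, mul_pow, div_eq_mul_inv]
  rw [integral_norm_det_sq_of_iIndepFun_col mM hM hcol (s := ‖t‖ ^ 2)
    (integral_one_sub_smul_entryMatrix_mul_conj hmeas hindep hident hL2 hmean hvar t),
    Fintype.card_fin, ht]
  exact sum_descFactorial_mul_div_pow_le (by positivity)
    (pow_lt_one₀ (norm_nonneg z) (mem_ball_zero_iff.mp hz) two_ne_zero) n

/-- **Uniform second moment bound for `qₙ`**: for i.i.d. entries with mean `0` and variance
`1`, for every `n ≥ 1` and every `z` in the open unit disc,
`E[|qₙ(z)|²] ≤ 1/(1 - |z|²)`, where `qₙ(z) = det(1 - z Aₙ/√n)`. -/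
theorem qn_second_moment_bound
    {Ω : Type*} [MeasurableSpace Ω] (P : Measure Ω) [IsProbabilityMeasure P]
    (a : ℕ → ℕ → Ω → ℂ)
    (hmeas : ∀ i j, Measurable (a i j))
    (hindep : iIndepFun (fun p : ℕ × ℕ => a p.1 p.2) P)
    (hident : ∀ i j, IdentDistrib (a i j) (a 0 0) P P)
    (hL2 : MemLp (a 0 0) 2 P)
    (hmean : ∫ ω, a 0 0 ω ∂P = 0)
    (hvar : ∫ ω, ‖a 0 0 ω‖ ^ 2 ∂P = 1)
    (n : ℕ) (hn : 1 ≤ n) (z : ℂ) (hz : z ∈ ball (0 : ℂ) 1) :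
    ∫ ω, ‖(1 - z • (((Real.sqrt n)⁻¹ : ℂ) • entryMatrix a n ω)).det‖ ^ 2 ∂P
      ≤ 1 / (1 - ‖z‖ ^ 2) :=
  qn_second_moment_bound_general P a hmeas hindep hident hL2 hmean hvar n z hz
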